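/- Let N = q^k n^2 be an odd perfect number in Eulerian form with k > 1. Write N = q^k · p_1^{2b_1} ⋯ p_s^{2b_s} · w^2 where p_1, ..., p_s are exactly the primes p dividing n such that q divides σ(p^{2b}) for p^{2b} || N. If no p_i divides σ(q^k), and assuming Cohen's bound ∑_{p|N} 1/p < ln 2 and that there is a prime r ≥ 7 with r || σ(q^k) and r ∉ {p_1,...,p_s}, then 2N > q^{3k} and hence q^k < n. -/

import Mathlib

/-!
Write `n² = A·B`, where `A = ∏ pᵢ^{2bᵢ}` collects the prime powers `p^a ∥ n²` with `q ∣ σ(p^a)`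
and `B = w²` is the rest. Since `q ∤ σ(q^k)`, the perfect-number equation
`σ(q^k)·σ(n²) = 2q^k·n²` forces `q^k ∣ ∏ σ(pᵢ^{2bᵢ})`, and Cohen's bound gives
`∏ σ(pᵢ^{2bᵢ}) / A ≤ ∏ p/(p-1) ≤ exp(3/2 · ∑ 1/p) < 2^{3/2}`, so `q^k < 2√2·A`.
On the other side `σ(q^k)` is prime to `q` and to `A`, so `σ(q^k) ∣ 2B`; as `B` is a square and
`r ∥ σ(q^k)` with `r` odd, even `r·σ(q^k) ∣ 2B`, whence `7q^k ≤ 2B`.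
Multiplying, `q^{2k} < (4√2/7)·AB < n²`.
-/

open ArithmeticFunction Finset
open scoped ArithmeticFunction.sigma

theorem Nat.Perfect.sigma_one_mul_sigma_one {a b : ℕ} (h : (a * b).Perfect) (hab : a.Coprime b) :
    σ 1 a * σ 1 b = 2 * (a * b) := by
  rw [← isMultiplicative_sigma.map_mul_of_coprime hab, sigma_one_apply]
  exact (perfect_iff_sum_divisors_eq_two_mul h.2).1 h

theorem ArithmeticFunction.le_sigma_one_self {m : ℕ} (hm : m ≠ 0) : m ≤ σ 1 m := by
  rw [sigma_one_apply]
  exact single_le_sum (f := fun d => d) (fun _ _ => Nat.zero_le _) (Nat.mem_divisors_self m hm)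

theorem Nat.Prime.not_dvd_sigma_one_pow {p : ℕ} (hp : p.Prime) (e : ℕ) :
    ¬ p ∣ σ 1 (p ^ e) := by
  rw [sigma_one_apply_prime_pow hp, sum_range_succ', pow_zero,
    Nat.dvd_add_right (dvd_sum fun i _ => dvd_pow_self p i.succ_ne_zero)]
  exact hp.not_dvd_one

theorem Nat.Prime.sigma_one_pow_le {p : ℕ} (hp : p.Prime) (e : ℕ) :
    (σ 1 (p ^ e) : ℝ) ≤ p ^ e * (p / (p - 1)) := by
  have hp1 : (1 : ℝ) < p := mod_cast hp.one_lt
  rw [sigma_one_apply_prime_pow hp]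
  push_cast
  rw [geom_sum_eq hp1.ne', mul_div_assoc', div_le_div_iff_of_pos_right (by linarith), ← pow_succ]
  linarith

theorem ArithmeticFunction.IsMultiplicative.map_eq_prod_mul_prod_sdiff {R : Type*}
    [CommMonoidWithZero R] {f : ArithmeticFunction R} (hf : f.IsMultiplicative) {m : ℕ}
    (hm : m ≠ 0) {S : Finset ℕ} (hS : S ⊆ m.primeFactors) :
    f m = (∏ p ∈ S, f (ordProj[p] m)) * ∏ p ∈ m.primeFactors \ S, f (ordProj[p] m) := by
  rw [mul_comm, prod_sdiff hS, hf.multiplicative_factorization f hm, Finsupp.prod,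
    Nat.support_factorization]

theorem Nat.prod_ordProj_mul_prod_sdiff_ordProj {m : ℕ} (hm : m ≠ 0) {S : Finset ℕ}
    (hS : S ⊆ m.primeFactors) :
    (∏ p ∈ S, ordProj[p] m) * ∏ p ∈ m.primeFactors \ S, ordProj[p] m = m := by
  simpa only [id_apply] using (isMultiplicative_id.map_eq_prod_mul_prod_sdiff hm hS).symm

theorem Nat.isSquare_ordProj_sq (p n : ℕ) : IsSquare (ordProj[p] (n ^ 2)) :=
  ⟨ordProj[p] n, by
    rw [Nat.factorization_pow, Finsupp.smul_apply, smul_eq_mul, ← pow_add]; ring_nf⟩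

theorem Real.div_sub_one_le_exp {x : ℝ} (hx : 3 ≤ x) : x / (x - 1) ≤ exp (3 / (2 * x)) :=
  calc x / (x - 1) = 1 / (x - 1) + 1 := by rw [div_add_one (by linarith)]; congr 1; ring
    _ ≤ exp (1 / (x - 1)) := add_one_le_exp _
    _ ≤ exp (3 / (2 * x)) :=
        exp_le_exp.2 <| by rw [div_le_div_iff₀ (by linarith) (by linarith)]; linarith

theorem Real.prod_div_sub_one_lt_two_mul_sqrt_two {ι : Type*} (s : Finset ι) (x : ι → ℝ)
    (hx : ∀ i ∈ s, 3 ≤ x i) (hs : ∑ i ∈ s, 1 / x i < log 2) :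
    ∏ i ∈ s, x i / (x i - 1) < 2 * √2 :=
  calc ∏ i ∈ s, x i / (x i - 1)
      ≤ ∏ i ∈ s, exp (3 / (2 * x i)) := prod_le_prod
        (fun i hi => div_nonneg (by linarith [hx i hi]) (by linarith [hx i hi]))
        fun i hi => div_sub_one_le_exp (hx i hi)
    _ = exp (3 / 2 * ∑ i ∈ s, 1 / x i) := by
        rw [← exp_sum, mul_sum]; congr 1; refine sum_congr rfl fun i _ => ?_; ring
    _ < exp (3 / 2 * log 2) := exp_lt_exp.2 (by linarith)
    _ = 2 * √2 := by
        rw [← exp_log (by positivity : (0 : ℝ) < 2 * √2), log_mul two_ne_zero (by positivity),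
          log_sqrt zero_le_two]
        ring_nf

theorem sq_lt_mul_of_lt_two_mul_sqrt_two_mul {Q A B : ℝ} (hQ : 0 < Q) (hA : Q < 2 * √2 * A)
    (hB : 7 * Q ≤ 2 * B) : Q ^ 2 < A * B := by
  have h2 : √2 * √2 = 2 := Real.mul_self_sqrt zero_le_two
  have h2pos : 0 < √2 := by positivity
  have hA0 : 0 < A := by nlinarith
  have hB0 : 0 < B := by linarith
  calc Q ^ 2 < 2 * √2 * A * Q := by nlinarith
    _ ≤ 2 * √2 * A * (2 * B / 7) := by gcongr; linarith
    _ = 4 * √2 / 7 * (A * B) := by ring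
    _ < A * B := by nlinarith [mul_pos hA0 hB0]

theorem Nat.Prime.sq_dvd_of_dvd_two_mul {r B : ℕ} (hr : r.Prime) (hr2 : r ≠ 2) (hB : IsSquare B)
    (h : r ∣ 2 * B) : r ^ 2 ∣ B := by
  obtain ⟨c, rfl⟩ := hB
  have hrc : r ∣ c :=
    (hr.dvd_mul.1 (((Nat.coprime_primes hr Nat.prime_two).2 hr2).dvd_of_dvd_mul_left h)).elim id id
  rw [sq]
  exact mul_dvd_mul hrc hrc

theorem Nat.Prime.mul_dvd_of_sq_dvd {r t m : ℕ} (hr : r.Prime) (hrt : r ∣ t)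
    (hrt2 : ¬ r ^ 2 ∣ t) (ht : t ∣ m) (hm : r ^ 2 ∣ m) : t * r ∣ m := by
  obtain ⟨u, rfl⟩ := hrt
  have hru : ¬ r ∣ u := fun h => hrt2 (by rw [sq]; exact mul_dvd_mul_left r h)
  rw [show r * u * r = r ^ 2 * u by ring]
  exact ((hr.coprime_iff_not_dvd.2 hru).pow_left 2).mul_dvd_of_dvd_of_dvd hm
    (dvd_of_mul_left_dvd ht)

theorem Nat.Prime.mul_le_two_mul_of_dvd_two_mul {r t B : ℕ} (hr : r.Prime) (hr2 : r ≠ 2)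
    (hrt : r ∣ t) (hrt2 : ¬ r ^ 2 ∣ t) (ht : t ∣ 2 * B) (hB : IsSquare B) (hB0 : B ≠ 0) :
    t * r ≤ 2 * B :=
  Nat.le_of_dvd (by omega) <| hr.mul_dvd_of_sq_dvd hrt hrt2 ht <|
    dvd_mul_of_dvd_right (hr.sq_dvd_of_dvd_two_mul hr2 hB (hrt.trans ht)) 2

def sigmaDvdPrimes (q m : ℕ) : Finset ℕ := {p ∈ m.primeFactors | q ∣ σ 1 (ordProj[p] m)}

section SigmaDvdPrimes

variable {q k m : ℕ}

theorem sigmaDvdPrimes_subset (q m : ℕ) : sigmaDvdPrimes q m ⊆ m.primeFactors :=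
  filter_subset _ _

theorem pow_dvd_prod_sigma_one_sigmaDvdPrimes (hq : q.Prime) (hm : m ≠ 0)
    (h : q ^ k ∣ σ 1 m) : q ^ k ∣ ∏ p ∈ sigmaDvdPrimes q m, σ 1 (ordProj[p] m) := by
  rw [isMultiplicative_sigma.map_eq_prod_mul_prod_sdiff hm (sigmaDvdPrimes_subset q m)] at h
  refine (Nat.Coprime.pow_left k (Nat.Coprime.prod_right fun p hp => ?_)).dvd_of_dvd_mul_right h
  rw [sigmaDvdPrimes, mem_sdiff, mem_filter] at hp
  exact hq.coprime_iff_not_dvd.2 fun h => hp.2 ⟨hp.1, h⟩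

theorem pow_lt_two_mul_sqrt_two_mul_prod_sigmaDvdPrimes (hq : q.Prime) (hm : Odd m)
    (hsplit : σ 1 (q ^ k) * σ 1 m = 2 * (q ^ k * m))
    (hsum : ∑ p ∈ m.primeFactors, (1 : ℝ) / p < Real.log 2) :
    (q : ℝ) ^ k < 2 * √2 * ∏ p ∈ sigmaDvdPrimes q m, ordProj[p] m := by
  set S := sigmaDvdPrimes q m
  have hS : ∀ p ∈ S, p.Prime ∧ 3 ≤ p := fun p hp => by
    have hpf := sigmaDvdPrimes_subset q m hp
    have hprime := Nat.prime_of_mem_primeFactors hpf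
    have hodd := Nat.odd_iff.1 (hm.of_dvd_nat (Nat.dvd_of_mem_primeFactors hpf))
    exact ⟨hprime, by have := hprime.two_le; omega⟩
  have hdvd : q ^ k ∣ σ 1 m :=
    ((hq.coprime_iff_not_dvd.2 (hq.not_dvd_sigma_one_pow k)).pow_left k).dvd_of_dvd_mul_left
      ⟨2 * m, by rw [hsplit]; ring⟩
  have hprod : ∏ p ∈ S, (p : ℝ) / (p - 1) < 2 * √2 :=
    Real.prod_div_sub_one_lt_two_mul_sqrt_two S _ (fun p hp => mod_cast (hS p hp).2)
      (hsum.trans_le' (sum_le_sum_of_subset_of_nonneg (sigmaDvdPrimes_subset q m)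
        fun _ _ _ => by positivity))
  calc (q : ℝ) ^ k
      ≤ ∏ p ∈ S, (σ 1 (ordProj[p] m) : ℝ) := by
        exact_mod_cast Nat.le_of_dvd
          (prod_pos fun p hp => sigma_pos 1 _ (pow_ne_zero _ (hS p hp).1.ne_zero))
          (pow_dvd_prod_sigma_one_sigmaDvdPrimes hq hm.pos.ne' hdvd)
    _ ≤ ∏ p ∈ S, ((ordProj[p] m : ℕ) : ℝ) * (p / (p - 1)) :=
        prod_le_prod (fun _ _ => Nat.cast_nonneg _) fun p hp => by
          exact_mod_cast (hS p hp).1.sigma_one_pow_le _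
    _ = (∏ p ∈ S, ordProj[p] m : ℕ) * ∏ p ∈ S, (p : ℝ) / (p - 1) := by
        rw [prod_mul_distrib, Nat.cast_prod]
    _ < (∏ p ∈ S, ordProj[p] m : ℕ) * (2 * √2) :=
        mul_lt_mul_of_pos_left hprod (mod_cast prod_pos fun p hp => pow_pos (hS p hp).1.pos _)
    _ = 2 * √2 * ∏ p ∈ S, ordProj[p] m := by push_cast; ring

theorem sigma_one_pow_dvd_two_mul_prod_sdiff_sigmaDvdPrimes (hq : q.Prime) (hm : m ≠ 0)
    (hsplit : σ 1 (q ^ k) * σ 1 m = 2 * (q ^ k * m))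
    (hS : ∀ p ∈ sigmaDvdPrimes q m, ¬ p ∣ σ 1 (q ^ k)) :
    σ 1 (q ^ k) ∣ 2 * ∏ p ∈ m.primeFactors \ sigmaDvdPrimes q m, ordProj[p] m := by
  have hcopq : (σ 1 (q ^ k)).Coprime (q ^ k) :=
    ((hq.coprime_iff_not_dvd.2 (hq.not_dvd_sigma_one_pow k)).pow_left k).symm
  have hcopA : (σ 1 (q ^ k)).Coprime (∏ p ∈ sigmaDvdPrimes q m, ordProj[p] m) :=
    Nat.Coprime.prod_right fun p hp =>
      (((Nat.prime_of_mem_primeFactors (sigmaDvdPrimes_subset q m hp)).coprime_iff_not_dvd.2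
        (hS p hp)).pow_left _).symm
  refine (hcopq.mul_right hcopA).dvd_of_dvd_mul_left ⟨σ 1 m, ?_⟩
  rw [hsplit]
  conv_rhs => rw [← Nat.prod_ordProj_mul_prod_sdiff_ordProj hm (sigmaDvdPrimes_subset q m)]
  ring

theorem pow_mul_le_two_mul_prod_sdiff_sigmaDvdPrimes {n r : ℕ} (hq : q.Prime) (hn : n ≠ 0)
    (hsplit : σ 1 (q ^ k) * σ 1 (n ^ 2) = 2 * (q ^ k * n ^ 2))
    (hS : ∀ p ∈ sigmaDvdPrimes q (n ^ 2), ¬ p ∣ σ 1 (q ^ k))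
    (hr : r.Prime) (hr2 : r ≠ 2) (hrdvd : r ∣ σ 1 (q ^ k))
    (hrexact : ¬ r ^ 2 ∣ σ 1 (q ^ k)) :
    q ^ k * r ≤
      2 * ∏ p ∈ (n ^ 2).primeFactors \ sigmaDvdPrimes q (n ^ 2), ordProj[p] (n ^ 2) := by
  have hn2 : n ^ 2 ≠ 0 := pow_ne_zero 2 hn
  calc q ^ k * r ≤ σ 1 (q ^ k) * r :=
        Nat.mul_le_mul_right r (le_sigma_one_self (pow_ne_zero k hq.ne_zero))
    _ ≤ _ := hr.mul_le_two_mul_of_dvd_two_mul hr2 hrdvd hrexact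
        (sigma_one_pow_dvd_two_mul_prod_sdiff_sigmaDvdPrimes hq hn2 hsplit hS)
        (isSquare_prod _ fun p _ => Nat.isSquare_ordProj_sq p n)
        (right_ne_zero_of_mul (Nat.prod_ordProj_mul_prod_sdiff_ordProj hn2
          (sigmaDvdPrimes_subset q _) ▸ hn2))

end SigmaDvdPrimes

theorem stmt_16_general (N q k n s : ℕ) (p : Fin s → ℕ) (r : ℕ)
    (hN : N = q ^ k * n ^ 2) (hodd : Odd N) (hperf : Nat.Perfect N)
    (hq : q.Prime) (hgcd : Nat.gcd q n = 1)
    (hchar : ∀ pp : ℕ, pp.Prime → pp ∣ n →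
      (q ∣ ArithmeticFunction.sigma 1 (pp ^ (N.factorization pp)) ↔ ∃ i, pp = p i))
    (hnodvd : ∀ i, ¬ p i ∣ ArithmeticFunction.sigma 1 (q ^ k))
    (hcohen : ∑ pp ∈ N.primeFactors, (1 : ℝ) / pp < Real.log 2)
    (hr : r.Prime) (hr7 : 7 ≤ r)
    (hrdvd : r ∣ ArithmeticFunction.sigma 1 (q ^ k))
    (hrexact : ¬ r ^ 2 ∣ ArithmeticFunction.sigma 1 (q ^ k)) :
    2 * N > q ^ (3 * k) ∧ q ^ k < n := by
  have hn : n ^ 2 ≠ 0 := right_ne_zero_of_mul (hN ▸ hperf.2.ne')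
  have hn0 : n ≠ 0 := (pow_ne_zero_iff two_ne_zero).1 hn
  have hdvdN : n ^ 2 ∣ N := hN ▸ dvd_mul_left _ _
  have hcop : (q ^ k).Coprime (n ^ 2) := Nat.Coprime.pow k 2 hgcd
  have hsplit := (hN ▸ hperf).sigma_one_mul_sigma_one hcop
  set S := sigmaDvdPrimes q (n ^ 2)
  set A := ∏ ℓ ∈ S, ordProj[ℓ] (n ^ 2)
  set B := ∏ ℓ ∈ (n ^ 2).primeFactors \ S, ordProj[ℓ] (n ^ 2)
  have hAB : A * B = n ^ 2 := Nat.prod_ordProj_mul_prod_sdiff_ordProj hn (sigmaDvdPrimes_subset q _)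
  have hA : (q : ℝ) ^ k < 2 * √2 * A :=
    pow_lt_two_mul_sqrt_two_mul_prod_sigmaDvdPrimes hq (hodd.of_dvd_nat hdvdN) hsplit
      (hcohen.trans_le' (sum_le_sum_of_subset_of_nonneg
        (Nat.primeFactors_mono hdvdN hperf.2.ne') fun _ _ _ => by positivity))
  have hSσ : ∀ ℓ ∈ S, ¬ ℓ ∣ σ 1 (q ^ k) := by
    intro ℓ hℓS
    obtain ⟨hℓn, hqσ⟩ := mem_filter.1 hℓS
    have hℓ := Nat.prime_of_mem_primeFactors hℓn
    have hfac : N.factorization ℓ = (n ^ 2).factorization ℓ := hN ▸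
      Nat.factorization_eq_of_coprime_right hcop
        (Nat.mem_primeFactors_iff_mem_primeFactorsList.1 hℓn)
    obtain ⟨i, rfl⟩ :=
      (hchar ℓ hℓ (hℓ.dvd_of_dvd_pow (Nat.dvd_of_mem_primeFactors hℓn))).1 (hfac ▸ hqσ)
    exact hnodvd i
  have hB : 7 * q ^ k ≤ 2 * B := le_trans (by rw [mul_comm]; gcongr)
    (pow_mul_le_two_mul_prod_sdiff_sigmaDvdPrimes hq hn0 hsplit hSσ hr (by omega) hrdvd hrexact)
  have hqn : (q ^ k) ^ 2 < n ^ 2 := by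
    have := sq_lt_mul_of_lt_two_mul_sqrt_two_mul (pow_pos (Nat.cast_pos.2 hq.pos) k) hA
      (B := B) (by exact_mod_cast hB)
    rw [← hAB]
    exact_mod_cast this
  refine ⟨?_, (Nat.pow_lt_pow_iff_left two_ne_zero).1 hqn⟩
  calc q ^ (3 * k) = q ^ k * (q ^ k) ^ 2 := by ring
    _ < q ^ k * n ^ 2 := Nat.mul_lt_mul_of_pos_left hqn (pow_pos hq.pos k)
    _ = N := hN.symm
    _ < 2 * N := by linarith [hperf.2]

theorem stmt_16 (N q k n w s : ℕ) (p b : Fin s → ℕ) (r : ℕ)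
    (hN : N = q ^ k * n ^ 2) (hodd : Odd N) (hperf : Nat.Perfect N)
    (hq : q.Prime) (hq4 : q % 4 = 1) (hk4 : k % 4 = 1) (hgcd : Nat.gcd q n = 1) (hk : 1 < k)
    (hpprime : ∀ i, (p i).Prime) (hpinj : Function.Injective p)
    (hfact : N = q ^ k * (∏ i, p i ^ (2 * b i)) * w ^ 2)
    (hchar : ∀ pp : ℕ, pp.Prime → pp ∣ n →
      (q ∣ ArithmeticFunction.sigma 1 (pp ^ (N.factorization pp)) ↔ ∃ i, pp = p i))
    (hnodvd : ∀ i, ¬ p i ∣ ArithmeticFunction.sigma 1 (q ^ k))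
    (hcohen : ∑ pp ∈ N.primeFactors, (1 : ℝ) / pp < Real.log 2)
    (hr : r.Prime) (hr7 : 7 ≤ r)
    (hrdvd : r ∣ ArithmeticFunction.sigma 1 (q ^ k))
    (hrexact : ¬ r ^ 2 ∣ ArithmeticFunction.sigma 1 (q ^ k))
    (hrnotp : ∀ i, r ≠ p i) :
    2 * N > q ^ (3 * k) ∧ q ^ k < n :=
  stmt_16_general N q k n s p r hN hodd hperf hq hgcd hchar hnodvd hcohen hr hr7 hrdvd hrexact
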